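/- arXiv:1504.01830 — 4 statements merged into one kernel-verified Lean document; each statement's English description precedes it below -/
import Mathlib

section
/- Let G be a group, ρ : G → {±1} a homomorphism with kernel G₀, and a : G × G → ℂ* a ρ-twisted 2-cocycle. Define w(h,k) = a(h,k⁻¹)·a(hk⁻¹,h⁻¹)·a(k,k⁻¹)·a(h,h⁻¹)⁻¹ for h ∉ G₀, k ∈ G₀, and b(k,l) = a(k,l) for k,l ∈ G₀. Then for all h ∉ G₀ and k,l ∈ G₀: w(h,kl)·b(k,l) = w(h,k)·w(h,l)·b(h l⁻¹ h⁻¹, h k⁻¹ h⁻¹). -/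
def IsRhoTwistedCocycle {G : Type*} [Group G] (ρ : G →* ℤˣ) (a : G → G → ℂˣ) : Prop :=
  ∀ g h k : G, a g h * a (g * h) k = a h k ^ ((ρ g : ℤ)) * a g (h * k)

noncomputable def w {G : Type*} [Group G] (a : G → G → ℂˣ) (h k : G) : ℂˣ :=
  a h k⁻¹ * a (h * k⁻¹) h⁻¹ * a k k⁻¹ * (a h h⁻¹)⁻¹

theorem anti_automorphism_axiom {G : Type*} [Group G] (ρ : G →* ℤˣ) (a : G → G → ℂˣ)
    (ha : IsRhoTwistedCocycle ρ a) :
    ∀ h k l : G, ρ h = -1 → ρ k = 1 → ρ l = 1 →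
      w a h (k * l) * a k l = w a h k * w a h l * a (h * l⁻¹ * h⁻¹) (h * k⁻¹ * h⁻¹) := by
  intro h k l hh hk hl
  have c1 : a h l⁻¹ * a (h*l⁻¹) k⁻¹ = (a l⁻¹ k⁻¹)⁻¹ * a h (l⁻¹*k⁻¹) := by
    have := ha h l⁻¹ k⁻¹
    simpa [hh, Units.val_neg, Units.val_one, zpow_neg, zpow_one] using this
  have c2 : a k l * a (k*l) (l⁻¹*k⁻¹) = a l (l⁻¹*k⁻¹) * a k k⁻¹ := by
    have := ha k l (l⁻¹*k⁻¹)
    simpa [hk, Units.val_one, zpow_one, mul_inv_cancel_left] using this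
  have c3 : a l l⁻¹ * a 1 k⁻¹ = a l⁻¹ k⁻¹ * a l (l⁻¹*k⁻¹) := by
    have := ha l l⁻¹ k⁻¹
    simpa [hl, Units.val_one, zpow_one] using this
  have c4 : a (h*l⁻¹) h⁻¹ * a (h*(l⁻¹*h⁻¹)) (h*(k⁻¹*h⁻¹))
      = (a h⁻¹ (h*(k⁻¹*h⁻¹)))⁻¹ * a (h*l⁻¹) (k⁻¹*h⁻¹) := by
    have := ha (h*l⁻¹) h⁻¹ (h*(k⁻¹*h⁻¹))
    simpa [map_mul, map_inv, hh, hl, Units.val_neg, Units.val_one, zpow_neg, zpow_one,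
      mul_assoc] using this
  have c5 : a (h*l⁻¹) k⁻¹ * a (h*(l⁻¹*k⁻¹)) h⁻¹
      = (a k⁻¹ h⁻¹)⁻¹ * a (h*l⁻¹) (k⁻¹*h⁻¹) := by
    have := ha (h*l⁻¹) k⁻¹ h⁻¹
    simpa [map_mul, map_inv, hh, hl, Units.val_neg, Units.val_one, zpow_neg, zpow_one,
      mul_assoc] using this
  have c6 : a h k⁻¹ * a (h*k⁻¹) h⁻¹ = (a k⁻¹ h⁻¹)⁻¹ * a h (k⁻¹*h⁻¹) := by
    have := ha h k⁻¹ h⁻¹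
    simpa [hh, Units.val_neg, Units.val_one, zpow_neg, zpow_one] using this
  have c7 : a h h⁻¹ * a 1 (h*(k⁻¹*h⁻¹))
      = (a h⁻¹ (h*(k⁻¹*h⁻¹)))⁻¹ * a h (k⁻¹*h⁻¹) := by
    have := ha h h⁻¹ (h*(k⁻¹*h⁻¹))
    simpa [hh, Units.val_neg, Units.val_one, zpow_neg, zpow_one] using this
  have c8 : a 1 1 * a 1 k⁻¹ = a 1 k⁻¹ * a 1 k⁻¹ := by
    have := ha 1 1 k⁻¹
    simpa using this
  have c9 : a 1 1 * a 1 (h*(k⁻¹*h⁻¹)) = a 1 (h*(k⁻¹*h⁻¹)) * a 1 (h*(k⁻¹*h⁻¹)) := by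
    have := ha 1 1 (h*(k⁻¹*h⁻¹))
    simpa using this
  -- abbreviations as explicit products
  set GLf := a h (l⁻¹*k⁻¹) * a (h*(l⁻¹*k⁻¹)) h⁻¹ * a (k*l) (l⁻¹*k⁻¹) * (a h h⁻¹)⁻¹ * a k l with hGL
  set GRf := a h k⁻¹ * a (h*k⁻¹) h⁻¹ * a k k⁻¹ * (a h h⁻¹)⁻¹ *
      (a h l⁻¹ * a (h*l⁻¹) h⁻¹ * a l l⁻¹ * (a h h⁻¹)⁻¹) *
      a (h*(l⁻¹*h⁻¹)) (h*(k⁻¹*h⁻¹)) with hGR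
  -- X uses L for signs -1 (i = 1,3,4,6,8) and R for signs +1 (i = 2,5,7,9)
  have E1 : GLf *
      ((a h l⁻¹ * a (h*l⁻¹) k⁻¹) *
       (a l (l⁻¹*k⁻¹) * a k k⁻¹) *
       (a l l⁻¹ * a 1 k⁻¹) *
       (a (h*l⁻¹) h⁻¹ * a (h*(l⁻¹*h⁻¹)) (h*(k⁻¹*h⁻¹))) *
       ((a k⁻¹ h⁻¹)⁻¹ * a (h*l⁻¹) (k⁻¹*h⁻¹)) *
       (a h k⁻¹ * a (h*k⁻¹) h⁻¹) *
       ((a h⁻¹ (h*(k⁻¹*h⁻¹)))⁻¹ * a h (k⁻¹*h⁻¹)) *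
       (a 1 1 * a 1 k⁻¹) *
       (a 1 (h*(k⁻¹*h⁻¹)) * a 1 (h*(k⁻¹*h⁻¹)))) =
      GRf *
      (((a l⁻¹ k⁻¹)⁻¹ * a h (l⁻¹*k⁻¹)) *
       (a k l * a (k*l) (l⁻¹*k⁻¹)) *
       (a l⁻¹ k⁻¹ * a l (l⁻¹*k⁻¹)) *
       ((a h⁻¹ (h*(k⁻¹*h⁻¹)))⁻¹ * a (h*l⁻¹) (k⁻¹*h⁻¹)) *
       (a (h*l⁻¹) k⁻¹ * a (h*(l⁻¹*k⁻¹)) h⁻¹) *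
       ((a k⁻¹ h⁻¹)⁻¹ * a h (k⁻¹*h⁻¹)) *
       (a h h⁻¹ * a 1 (h*(k⁻¹*h⁻¹))) *
       (a 1 k⁻¹ * a 1 k⁻¹) *
       (a 1 1 * a 1 (h*(k⁻¹*h⁻¹)))) := by
    rw [hGL, hGR, Units.ext_iff]
    push_cast
    field_simp
  have E2 : ((a h l⁻¹ * a (h*l⁻¹) k⁻¹) *
       (a l (l⁻¹*k⁻¹) * a k k⁻¹) *
       (a l l⁻¹ * a 1 k⁻¹) *
       (a (h*l⁻¹) h⁻¹ * a (h*(l⁻¹*h⁻¹)) (h*(k⁻¹*h⁻¹))) *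
       ((a k⁻¹ h⁻¹)⁻¹ * a (h*l⁻¹) (k⁻¹*h⁻¹)) *
       (a h k⁻¹ * a (h*k⁻¹) h⁻¹) *
       ((a h⁻¹ (h*(k⁻¹*h⁻¹)))⁻¹ * a h (k⁻¹*h⁻¹)) *
       (a 1 1 * a 1 k⁻¹) *
       (a 1 (h*(k⁻¹*h⁻¹)) * a 1 (h*(k⁻¹*h⁻¹)))) =
      (((a l⁻¹ k⁻¹)⁻¹ * a h (l⁻¹*k⁻¹)) *
       (a k l * a (k*l) (l⁻¹*k⁻¹)) *
       (a l⁻¹ k⁻¹ * a l (l⁻¹*k⁻¹)) *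
       ((a h⁻¹ (h*(k⁻¹*h⁻¹)))⁻¹ * a (h*l⁻¹) (k⁻¹*h⁻¹)) *
       (a (h*l⁻¹) k⁻¹ * a (h*(l⁻¹*k⁻¹)) h⁻¹) *
       ((a k⁻¹ h⁻¹)⁻¹ * a h (k⁻¹*h⁻¹)) *
       (a h h⁻¹ * a 1 (h*(k⁻¹*h⁻¹))) *
       (a 1 k⁻¹ * a 1 k⁻¹) *
       (a 1 1 * a 1 (h*(k⁻¹*h⁻¹)))) := by
    rw [c1, c2, c3, c4, c5, c6, c7, c8, c9]
  rw [E2] at E1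
  have final : GLf = GRf := mul_right_cancel E1
  rw [hGL, hGR] at final
  calc w a h (k * l) * a k l
      = GLf := by rw [hGL]; simp only [w, mul_inv_rev, mul_assoc]
    _ = GRf := final
    _ = w a h k * w a h l * a (h * l⁻¹ * h⁻¹) (h * k⁻¹ * h⁻¹) := by
        rw [hGR]; simp only [w, mul_inv_rev, mul_assoc]
end

section
/- Let G be a group, ρ : G → {±1} a homomorphism with kernel G₀, and a : G × G → ℂ* a ρ-twisted 2-cocycle. Define θ(g) = a(g,g) for g ∉ G₀ and w(h,k) = a(h,k⁻¹)a(hk⁻¹,h⁻¹)a(k,k⁻¹)/a(h,h⁻¹). Then for all g ∉ G₀ and h ∉ G₀: w(h,g²)·θ(g) = θ(h g⁻¹ h⁻¹). -/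
lemma cocycle_neg {G : Type*} [Group G] (ρ : G →* ℤˣ) (a : G → G → ℂˣ)
    (ha : IsRhoTwistedCocycle ρ a) {x : G} (hx : ρ x = -1) (y z : G) :
    a y z * (a x y * a (x * y) z) = a x (y * z) := by
  have H := ha x y z
  rw [hx] at H
  simp only [Units.val_neg, Units.val_one, zpow_neg, zpow_one] at H
  rw [H, mul_inv_cancel_left]

lemma cocycle_pos {G : Type*} [Group G] (ρ : G →* ℤˣ) (a : G → G → ℂˣ)
    (ha : IsRhoTwistedCocycle ρ a) {x : G} (hx : ρ x = 1) (y z : G) :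
    a x y * a (x * y) z = a y z * a x (y * z) := by
  have H := ha x y z
  rw [hx] at H
  simpa using H

theorem crosscap_transformation_axiom {G : Type*} [Group G] (ρ : G →* ℤˣ) (a : G → G → ℂˣ)
    (ha : IsRhoTwistedCocycle ρ a) :
    ∀ g h : G, ρ g = -1 → ρ h = -1 →
      w a h (g ^ 2) * a g g = a (h * g⁻¹ * h⁻¹) (h * g⁻¹ * h⁻¹) := by
  intro g h hg hh
  have hhg : ρ (h * g⁻¹) = 1 := by rw [map_mul, map_inv, hg, hh]; decide
  have nrm : ∀ {u v : ℂˣ}, u = v → (u : ℂ) = (v : ℂ) := fun h => by rw [h]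
  have H1 : (a (g⁻¹*g⁻¹) (h⁻¹) : ℂ) * ((a (h) (g⁻¹*g⁻¹) : ℂ) * (a (h*(g⁻¹*g⁻¹)) (h⁻¹) : ℂ)) = (a (h) (g⁻¹*(g⁻¹*h⁻¹)) : ℂ) := by
    have T := nrm (cocycle_neg ρ a ha hh (g⁻¹*g⁻¹) h⁻¹)
    simp only [Units.val_mul, mul_assoc, one_mul, mul_one, mul_inv_cancel_left,
      inv_mul_cancel_left, mul_inv_cancel, inv_mul_cancel] at T ⊢
    exact T
  have H2 : (a (g) (g⁻¹*g⁻¹) : ℂ) * ((a (g) (g) : ℂ) * (a (g*g) (g⁻¹*g⁻¹) : ℂ)) = (a (g) (g⁻¹) : ℂ) := by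
    have T := nrm (cocycle_neg ρ a ha hg g (g⁻¹*g⁻¹))
    simp only [Units.val_mul, mul_assoc, one_mul, mul_one, mul_inv_cancel_left,
      inv_mul_cancel_left, mul_inv_cancel, inv_mul_cancel] at T ⊢
    exact T
  have H3 : (a (g) (g⁻¹*(g⁻¹*h⁻¹)) : ℂ) = (a (g⁻¹*g⁻¹) (h⁻¹) : ℂ) * ((a (g) (g⁻¹*g⁻¹) : ℂ) * (a (g⁻¹) (h⁻¹) : ℂ)) := by
    have T := nrm (cocycle_neg ρ a ha hg (g⁻¹*g⁻¹) h⁻¹).symm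
    simp only [Units.val_mul, mul_assoc, one_mul, mul_one, mul_inv_cancel_left,
      inv_mul_cancel_left, mul_inv_cancel, inv_mul_cancel] at T ⊢
    exact T
  have H4 : (a (g⁻¹) (g⁻¹*h⁻¹) : ℂ) * ((a (g) (g⁻¹) : ℂ) * (a (1) (g⁻¹*h⁻¹) : ℂ)) = (a (g) (g⁻¹*(g⁻¹*h⁻¹)) : ℂ) := by
    have T := nrm (cocycle_neg ρ a ha hg g⁻¹ (g⁻¹*h⁻¹))
    simp only [Units.val_mul, mul_assoc, one_mul, mul_one, mul_inv_cancel_left,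
      inv_mul_cancel_left, mul_inv_cancel, inv_mul_cancel] at T ⊢
    exact T
  have H6 : (a (h) (g⁻¹*(g⁻¹*h⁻¹)) : ℂ) = (a (g⁻¹) (g⁻¹*h⁻¹) : ℂ) * ((a (h) (g⁻¹) : ℂ) * (a (h*g⁻¹) (g⁻¹*h⁻¹) : ℂ)) := by
    have T := nrm (cocycle_neg ρ a ha hh g⁻¹ (g⁻¹*h⁻¹)).symm
    simp only [Units.val_mul, mul_assoc, one_mul, mul_one, mul_inv_cancel_left,
      inv_mul_cancel_left, mul_inv_cancel, inv_mul_cancel] at T ⊢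
    exact T
  have H7 : (a (h⁻¹) (h*(g⁻¹*h⁻¹)) : ℂ) * (a (h*g⁻¹) (g⁻¹*h⁻¹) : ℂ) = (a (h*g⁻¹) (h⁻¹) : ℂ) * (a (h*(g⁻¹*h⁻¹)) (h*(g⁻¹*h⁻¹)) : ℂ) := by
    have T := nrm (cocycle_pos ρ a ha hhg h⁻¹ (h*(g⁻¹*h⁻¹))).symm
    simp only [Units.val_mul, mul_assoc, one_mul, mul_one, mul_inv_cancel_left,
      inv_mul_cancel_left, mul_inv_cancel, inv_mul_cancel] at T ⊢
    exact T
  have H8 : (a (g⁻¹) (h⁻¹) : ℂ) * ((a (h) (g⁻¹) : ℂ) * (a (h*g⁻¹) (h⁻¹) : ℂ)) = (a (h) (g⁻¹*h⁻¹) : ℂ) := by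
    have T := nrm (cocycle_neg ρ a ha hh g⁻¹ h⁻¹)
    simp only [Units.val_mul, mul_assoc, one_mul, mul_one, mul_inv_cancel_left,
      inv_mul_cancel_left, mul_inv_cancel, inv_mul_cancel] at T ⊢
    exact T
  have H9 : (a (h) (g⁻¹*h⁻¹) : ℂ) = (a (h⁻¹) (h*(g⁻¹*h⁻¹)) : ℂ) * ((a (h) (h⁻¹) : ℂ) * (a (1) (h*(g⁻¹*h⁻¹)) : ℂ)) := by
    have T := nrm (cocycle_neg ρ a ha hh h⁻¹ (h*(g⁻¹*h⁻¹))).symm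
    simp only [Units.val_mul, mul_assoc, one_mul, mul_one, mul_inv_cancel_left,
      inv_mul_cancel_left, mul_inv_cancel, inv_mul_cancel] at T ⊢
    exact T
  have E1 : (a (1) (1) : ℂ) * (a (1) (g⁻¹*h⁻¹) : ℂ) = (a (1) (g⁻¹*h⁻¹) : ℂ) * (a (1) (g⁻¹*h⁻¹) : ℂ) := by
    have T := nrm (cocycle_pos ρ a ha (map_one ρ) 1 (g⁻¹*h⁻¹))
    simp only [Units.val_mul, mul_assoc, one_mul, mul_one, mul_inv_cancel_left,
      inv_mul_cancel_left, mul_inv_cancel, inv_mul_cancel] at T ⊢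
    exact T
  have E2 : (a (1) (h*(g⁻¹*h⁻¹)) : ℂ) * (a (1) (h*(g⁻¹*h⁻¹)) : ℂ) = (a (1) (1) : ℂ) * (a (1) (h*(g⁻¹*h⁻¹)) : ℂ) := by
    have T := nrm (cocycle_pos ρ a ha (map_one ρ) 1 (h*(g⁻¹*h⁻¹))).symm
    simp only [Units.val_mul, mul_assoc, one_mul, mul_one, mul_inv_cancel_left,
      inv_mul_cancel_left, mul_inv_cancel, inv_mul_cancel] at T ⊢
    exact T
  have mulc : ∀ {x y z v : ℂ}, x = y → z = v → x * z = y * v := fun h h' => by rw [h, h']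
  have big := mulc (mulc (mulc (mulc (mulc (mulc (mulc (mulc (mulc H1 H2) H3) H4) H6) H7) H8) H9) E1) E2
  have hV : ((a (h) (g⁻¹*(g⁻¹*h⁻¹)) : ℂ)) * ((a (g) (g⁻¹) : ℂ)) * ((a (g⁻¹*g⁻¹) (h⁻¹) : ℂ) * ((a (g) (g⁻¹*g⁻¹) : ℂ) * (a (g⁻¹) (h⁻¹) : ℂ))) * ((a (g) (g⁻¹*(g⁻¹*h⁻¹)) : ℂ)) * ((a (g⁻¹) (g⁻¹*h⁻¹) : ℂ) * ((a (h) (g⁻¹) : ℂ) * (a (h*g⁻¹) (g⁻¹*h⁻¹) : ℂ))) * ((a (h*g⁻¹) (h⁻¹) : ℂ) * (a (h*(g⁻¹*h⁻¹)) (h*(g⁻¹*h⁻¹)) : ℂ)) * ((a (h) (g⁻¹*h⁻¹) : ℂ)) * ((a (h⁻¹) (h*(g⁻¹*h⁻¹)) : ℂ) * ((a (h) (h⁻¹) : ℂ) * (a (1) (h*(g⁻¹*h⁻¹)) : ℂ))) * ((a (1) (g⁻¹*h⁻¹) : ℂ) * (a (1) (g⁻¹*h⁻¹) : ℂ)) *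 ((a (1) (1) : ℂ) * (a (1) (h*(g⁻¹*h⁻¹)) : ℂ)) ≠ 0 := by
    apply_rules [mul_ne_zero, Units.ne_zero]
  have key : (a (h) (g⁻¹*g⁻¹) : ℂ) * (a (h*(g⁻¹*g⁻¹)) (h⁻¹) : ℂ) * (a (g*g) (g⁻¹*g⁻¹) : ℂ) * (a (g) (g) : ℂ)
      = (a (h*(g⁻¹*h⁻¹)) (h*(g⁻¹*h⁻¹)) : ℂ) * (a (h) (h⁻¹) : ℂ) := by
    apply mul_right_cancel₀ hV
    calc (a (h) (g⁻¹*g⁻¹) : ℂ) * (a (h*(g⁻¹*g⁻¹)) (h⁻¹) : ℂ) * (a (g*g) (g⁻¹*g⁻¹) : ℂ) * (a (g) (g) : ℂ) * (((a (h) (g⁻¹*(g⁻¹*h⁻¹)) : ℂ)) * ((a (g) (g⁻¹) : ℂ)) * ((a (g⁻¹*g⁻¹) (h⁻¹) : ℂ) * ((a (g) (g⁻¹*g⁻¹) : ℂ) * (a (g⁻¹) (h⁻¹) : ℂ))) * ((a (g) (g⁻¹*(g⁻¹*h⁻¹)) : ℂ)) * ((a (g⁻¹) (g⁻¹*h⁻¹)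 : ℂ) * ((a (h) (g⁻¹) : ℂ) * (a (h*g⁻¹) (g⁻¹*h⁻¹) : ℂ))) * ((a (h*g⁻¹) (h⁻¹) : ℂ) * (a (h*(g⁻¹*h⁻¹)) (h*(g⁻¹*h⁻¹)) : ℂ)) * ((a (h) (g⁻¹*h⁻¹) : ℂ)) * ((a (h⁻¹) (h*(g⁻¹*h⁻¹)) : ℂ) * ((a (h) (h⁻¹) : ℂ) * (a (1) (h*(g⁻¹*h⁻¹)) : ℂ))) * ((a (1) (g⁻¹*h⁻¹) : ℂ) * (a (1) (g⁻¹*h⁻¹) : ℂ)) * ((a (1) (1) : ℂ) * (a (1) (h*(g⁻¹*h⁻¹)) : ℂ)))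
        = (a (h*(g⁻¹*h⁻¹)) (h*(g⁻¹*h⁻¹)) : ℂ) * (a (h) (h⁻¹) : ℂ) * (((a (g⁻¹*g⁻¹) (h⁻¹) : ℂ) * ((a (h) (g⁻¹*g⁻¹) : ℂ) * (a (h*(g⁻¹*g⁻¹)) (h⁻¹) : ℂ))) * ((a (g) (g⁻¹*g⁻¹) : ℂ) * ((a (g) (g) : ℂ) * (a (g*g) (g⁻¹*g⁻¹) : ℂ))) * ((a (g) (g⁻¹*(g⁻¹*h⁻¹)) : ℂ)) * ((a (g⁻¹) (g⁻¹*h⁻¹) : ℂ) * ((a (g) (g⁻¹) : ℂ) * (a (1) (g⁻¹*h⁻¹) : ℂ))) * ((a (h) (g⁻¹*(g⁻¹*h⁻¹)) : ℂ)) * ((a (h⁻¹) (h*(g⁻¹*h⁻¹)) : ℂ) * (a (h*g⁻¹) (g⁻¹*h⁻¹) : ℂ)) * ((a (g⁻¹) (h⁻¹) : ℂ) * ((a (h) (g⁻¹) : ℂ) * (a (h*g⁻¹) (h⁻¹) : ℂ))) * ((a (h) (g⁻¹*h⁻¹) : ℂ)) * ((a (1) (1) : ℂ) * (a (1) (g⁻¹*h⁻¹)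 : ℂ)) * ((a (1) (h*(g⁻¹*h⁻¹)) : ℂ) * (a (1) (h*(g⁻¹*h⁻¹)) : ℂ))) := by ring
      _ = _ := by rw [big]
  have keyU : a h (g⁻¹*g⁻¹) * a (h*(g⁻¹*g⁻¹)) h⁻¹ * a (g*g) (g⁻¹*g⁻¹) * a g g
      = a (h*g⁻¹*h⁻¹) (h*g⁻¹*h⁻¹) * a h h⁻¹ := by
    rw [Units.ext_iff]
    push_cast
    rw [mul_assoc h g⁻¹ h⁻¹]
    exact key
  simp only [w, pow_two, mul_inv_rev]
  rw [mul_right_comm, keyU, mul_inv_cancel_right]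
end

section
/- Let G be a group, ρ : G → {±1} a homomorphism with kernel G₀, and a : G × G → ℂ* a ρ-twisted 2-cocycle. Define b(k,l)=a(k,l), θ(g)=a(g,g), w(g,k) = a(g,k⁻¹)a(gk⁻¹,g⁻¹)a(k,k⁻¹)/a(g,g⁻¹). Then for all g ∉ G₀ and k ∈ G₀: b(g²,k)·θ(g) = b(g k⁻¹ g⁻¹, gkgk)·w(g,k)·θ(gk). -/
/-!
Seven instances of the cocycle identity, together with `a(1,x) = a(1,1)`, reduce the claim to
`a(k,k⁻¹) = a(k⁻¹,k)` and `a(g,g⁻¹) a(g⁻¹,g) a(1,1)² = 1`. These are the cases `ρ = ±1` of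
`a(g,g⁻¹) a(1,1) = (a(g⁻¹,g) a(1,1))^ρ(g)`, the instance `(g,g⁻¹,g)` after the normalisations
`a(1,g) = a(1,1)` and `a(g,1) = a(1,1)^ρ(g)`.
-/

def IsTwistedCocycle {G M : Type*} [Group G] [CommGroup M] (ρ : G →* ℤˣ) (a : G → G → M) :
    Prop :=
  ∀ g h k : G, a g h * a (g * h) k = a h k ^ (ρ g : ℤ) * a g (h * k)

namespace IsTwistedCocycle

variable {G M : Type*} [Group G] [CommGroup M] {ρ : G →* ℤˣ} {a : G → G → M}

theorem one_left (ha : IsTwistedCocycle ρ a) (k : G) : a 1 k = a 1 1 :=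
  (by simpa using ha 1 1 k : a 1 1 = a 1 k).symm

theorem one_right (ha : IsTwistedCocycle ρ a) (g : G) : a g 1 = a 1 1 ^ (ρ g : ℤ) := by
  simpa using ha g 1 1

theorem self_inv_mul_one_one (ha : IsTwistedCocycle ρ a) (g : G) :
    a g g⁻¹ * a 1 1 = (a g⁻¹ g * a 1 1) ^ (ρ g : ℤ) := by
  have h := ha g g⁻¹ g
  rwa [mul_inv_cancel, inv_mul_cancel, ha.one_left g, ha.one_right g, ← mul_zpow] at h

theorem apply_of_eq_one (ha : IsTwistedCocycle ρ a) {g : G} (hg : ρ g = 1) (h k : G) :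
    a g h * a (g * h) k = a h k * a g (h * k) := by
  simpa [hg] using ha g h k

theorem apply_of_eq_neg_one (ha : IsTwistedCocycle ρ a) {g : G} (hg : ρ g = -1) (h k : G) :
    a g h * a (g * h) k = (a h k)⁻¹ * a g (h * k) := by
  simpa [hg] using ha g h k

theorem self_inv_eq_inv_self (ha : IsTwistedCocycle ρ a) {k : G} (hk : ρ k = 1) :
    a k k⁻¹ = a k⁻¹ k := by
  simpa [hk] using ha.self_inv_mul_one_one k

theorem self_inv_mul_inv_self (ha : IsTwistedCocycle ρ a) {g : G} (hg : ρ g = -1) :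
    a g g⁻¹ * a g⁻¹ g * a 1 1 ^ 2 = 1 := by
  have := ha.self_inv_mul_one_one g
  rw [hg, Units.val_neg, Units.val_one, zpow_neg_one, ← mul_inv_eq_one, inv_inv] at this
  rw [← this, pow_two]
  ac_rfl

theorem crosscap (ha : IsTwistedCocycle ρ a) {g k : G} (hg : ρ g = -1) (hk : ρ k = 1) :
    a (g ^ 2) k * a g g =
      a (g * k⁻¹ * g⁻¹) (g * k * g * k) *
        (a g k⁻¹ * a (g * k⁻¹) g⁻¹ * a k k⁻¹ * (a g g⁻¹)⁻¹) * a (g * k) (g * k) := by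
  have hg' : ρ g⁻¹ = -1 := by simp [hg]
  have hk' : ρ k⁻¹ = 1 := by simp [hk]
  have h₁ := ha.apply_of_eq_neg_one hg g k
  have h₂ := ha.apply_of_eq_neg_one hg k⁻¹ g⁻¹
  have h₃ := ha.apply_of_eq_neg_one hg (k⁻¹ * g⁻¹) (g * k * g * k)
  have h₄ := ha.apply_of_eq_one hk' g⁻¹ (g * k * g * k)
  have h₅ := ha.apply_of_eq_neg_one hg' (g * k) (g * k)
  have h₆ := ha.apply_of_eq_one hk' k (g * k)
  have h₇ := ha.apply_of_eq_neg_one hg' g k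
  have h₈ := ha.one_left k
  have h₉ := ha.one_left (g * k)
  have h₁₀ := ha.self_inv_eq_inv_self hk
  have h₁₁ := ha.self_inv_mul_inv_self hg
  apply Additive.ofMul.injective
  apply_fun Additive.ofMul at h₁ h₂ h₃ h₄ h₅ h₆ h₇ h₈ h₉ h₁₀ h₁₁
  simp only [pow_two, mul_assoc, inv_mul_cancel_left, inv_mul_cancel, ofMul_mul, ofMul_inv,
    ofMul_one] at h₁ h₂ h₃ h₄ h₅ h₆ h₇ h₈ h₉ h₁₀ h₁₁ ⊢
  linear_combination (norm := abel) h₁ - h₂ - h₃ + h₄ - h₅ - h₆ - h₇ + h₈ + h₉ - h₁₀ + h₁₁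

end IsTwistedCocycle

theorem crosscap_multiplication_axiom {G : Type*} [Group G] (ρ : G →* ℤˣ) (a : G → G → ℂˣ)
    (ha : IsRhoTwistedCocycle ρ a) :
    ∀ g k : G, ρ g = -1 → ρ k = 1 →
      a (g ^ 2) k * a g g =
        a (g * k⁻¹ * g⁻¹) (g * k * g * k) * w a g k * a (g * k) (g * k) :=
  fun _ _ hg hk => IsTwistedCocycle.crosscap ha hg hk
end

section
/- Let G be a group, ρ : G → {±1} a homomorphism with kernel G₀ of index 2 (witnessed by T with ρ(T)=-1), and a, a' two ρ-twisted 2-cocycles in the gauge a(k,l) = a(l⁻¹,k⁻¹)⁻¹, a(k,k⁻¹)=1, a(k,T)=1 for k,l ∈ G₀ (and similarly for a'). If a and a' agree on G₀ × G₀, on pairs of the form (g,g) for g ∉ G₀, and give equal w(h,k) := a(h,k⁻¹)a(hk⁻¹,h⁻¹)a(k,k⁻¹)/a(h,h⁻¹) for all h ∉ G₀, k ∈ G₀, and a(T,T⁻¹) = a'(T,T⁻¹), then a = a'. -/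
theorem twisted_cocycle_uniqueness {G : Type*} [Group G] (ρ : G →* ℤˣ)
    (a a' : G → G → ℂˣ)
    (ha : IsRhoTwistedCocycle ρ a) (ha' : IsRhoTwistedCocycle ρ a')
    (T : G) (hT : ρ T = -1)
    (hg1 : ∀ k l : G, ρ k = 1 → ρ l = 1 → a k l = (a l⁻¹ k⁻¹)⁻¹)
    (hg2 : ∀ k : G, ρ k = 1 → a k k⁻¹ = 1)
    (hg3 : ∀ k : G, ρ k = 1 → a k T = 1)
    (hg1' : ∀ k l : G, ρ k = 1 → ρ l = 1 → a' k l = (a' l⁻¹ k⁻¹)⁻¹)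
    (hg2' : ∀ k : G, ρ k = 1 → a' k k⁻¹ = 1)
    (hg3' : ∀ k : G, ρ k = 1 → a' k T = 1)
    (hb : ∀ k l : G, ρ k = 1 → ρ l = 1 → a k l = a' k l)
    (hθ : ∀ g : G, ρ g = -1 → a g g = a' g g)
    (hw : ∀ h k : G, ρ h = -1 → ρ k = 1 → w a h k = w a' h k)
    (hTT : a T T⁻¹ = a' T T⁻¹) :
    a = a' := by
  have hone : ∀ g : G, ρ g = 1 ∨ ρ g = -1 := fun g => Int.units_eq_one_or (ρ g)
  have h11 : a 1 1 = 1 := by have := hg2 1 (map_one ρ); simpa using this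
  have h11' : a' 1 1 = 1 := by have := hg2' 1 (map_one ρ); simpa using this
  -- a x 1 = 1
  have haR : ∀ x : G, a x 1 = 1 := by
    intro x
    have h := ha x 1 1
    simp [h11] at h
    exact h
  have haR' : ∀ x : G, a' x 1 = 1 := by
    intro x
    have h := ha' x 1 1
    simp [h11'] at h
    exact h
  -- step A : pairs (1,-1)
  have hA : ∀ k h : G, ρ k = 1 → ρ h = -1 → a k h = a' k h := by
    intro k h hk hh
    have hl : ρ (h * T⁻¹) = 1 := by rw [map_mul, map_inv, hh, hT]; decide
    have hkl : ρ (k * (h * T⁻¹)) = 1 := by rw [map_mul, hk, hl, one_mul]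
    have h1 := ha k (h * T⁻¹) T
    have h2 := ha' k (h * T⁻¹) T
    rw [hg3 _ hl, hg3 _ hkl, hk, inv_mul_cancel_right] at h1
    rw [hg3' _ hl, hg3' _ hkl, hk, inv_mul_cancel_right] at h2
    simp only [Units.val_one, zpow_one, one_zpow, mul_one, one_mul] at h1 h2
    rw [← h1, ← h2]
    exact hb _ _ hk hl
  -- diagonal inverse for g ∉ G₀
  have hginvd : ∀ g : G, ρ g = -1 → a g g⁻¹ = a' g g⁻¹ := by
    intro g hg
    have hgg : ρ (g * g) = 1 := by rw [map_mul, hg]; decide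
    have hgi : ρ g⁻¹ = -1 := by rw [map_inv, hg]; decide
    have h1 := ha g g g⁻¹
    have h2 := ha' g g g⁻¹
    rw [hg, mul_inv_cancel, haR] at h1
    rw [hg, mul_inv_cancel, haR'] at h2
    simp only [Units.val_neg, Units.val_one, zpow_neg, zpow_one, mul_one] at h1 h2
    have hE : a g g * a (g * g) g⁻¹ = a' g g * a' (g * g) g⁻¹ := by
      rw [hθ g hg, hA _ _ hgg hgi]
    have := (h1.symm.trans hE).trans h2
    exact inv_injective this
  -- pairs of shape (g*m, g⁻¹)
  have hE2 : ∀ g m : G, ρ g = -1 → ρ m = 1 → a (g * m) g⁻¹ = a' (g * m) g⁻¹ := by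
    intro g m hg hm
    have hgm : ρ (g * m) = -1 := by rw [map_mul, hg, hm]; decide
    have hgi : ρ g⁻¹ = -1 := by rw [map_inv, hg]; decide
    have hgmg : ρ (g * m * g⁻¹) = 1 := by rw [map_mul, map_mul, hg, hm, hgi]; decide
    have h1 := ha (g * m) g⁻¹ g
    have h2 := ha' (g * m) g⁻¹ g
    rw [hgm, inv_mul_cancel, haR] at h1
    rw [hgm, inv_mul_cancel, haR'] at h2
    simp only [Units.val_neg, Units.val_one, zpow_neg, zpow_one, mul_one] at h1 h2
    have hB : a (g * m * g⁻¹) g = a' (g * m * g⁻¹) g := hA _ _ hgmg hg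
    have hC : a g⁻¹ g = a' g⁻¹ g := by
      have := hginvd g⁻¹ hgi
      rwa [inv_inv] at this
    have key : a (g * m) g⁻¹ * a (g * m * g⁻¹) g = a' (g * m) g⁻¹ * a' (g * m * g⁻¹) g := by
      rw [h1, h2, hC]
    rw [hB] at key
    exact mul_right_cancel key
  -- pairs (-1, 1)
  have hCmk : ∀ g m : G, ρ g = -1 → ρ m = 1 → a g m = a' g m := by
    intro g m hg hm
    have hmi : ρ m⁻¹ = 1 := by rw [map_inv, hm]; rfl
    have hwgm := hw g m⁻¹ hg hmi
    unfold w at hwgm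
    rw [hg2 _ hmi, hg2' _ hmi, inv_inv, hginvd g hg] at hwgm
    simp only [mul_one] at hwgm
    have key := mul_right_cancel hwgm
    rw [hE2 g m hg hm] at key
    exact mul_right_cancel key
  -- pairs (-1, -1)
  have hD : ∀ g h : G, ρ g = -1 → ρ h = -1 → a g h = a' g h := by
    intro g h hg hh
    have hgh : ρ (g * h) = 1 := by rw [map_mul, hg, hh]; decide
    have hhi : ρ h⁻¹ = -1 := by rw [map_inv, hh]; decide
    have h1 := ha g h h⁻¹
    have h2 := ha' g h h⁻¹
    rw [hg, mul_inv_cancel, haR] at h1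
    rw [hg, mul_inv_cancel, haR'] at h2
    simp only [Units.val_neg, Units.val_one, zpow_neg, zpow_one, mul_one] at h1 h2
    have key : a g h * a (g * h) h⁻¹ = a' g h * a' (g * h) h⁻¹ := by
      rw [h1, h2, hginvd h hh]
    rw [hA _ _ hgh hhi] at key
    exact mul_right_cancel key
  funext g h
  rcases hone g with hg | hg <;> rcases hone h with hh | hh
  · exact hb g h hg hh
  · exact hA g h hg hh
  · exact hCmk g h hg hh
  · exact hD g h hg hh
end
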